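/- For G(2^m, 2) with m ≥ 1, ⌊m/2⌋ ≤ rc(G(2^m,2)) ≤ src(G(2^m,2)) ≤ ⌈m/2⌉; in particular if m is even then rc(G(2^m,2)) = src(G(2^m,2)) = m/2. -/

import Mathlib

open SimpleGraph Finset

/-- An edge-coloring with colors `< k` such that every two vertices are joined by a
path whose edge colors are pairwise distinct. -/
def RainbowConnected {V : Type*} (G : SimpleGraph V) (k : ℕ) : Prop :=
  ∃ c : Sym2 V → ℕ, (∀ e ∈ G.edgeSet, c e < k) ∧
    ∀ u v : V, ∃ p : G.Walk u v, p.IsPath ∧ (p.edges.map c).Nodup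

/-- As above, but the rainbow path must be a geodesic. -/
def StrongRainbowConnected {V : Type*} (G : SimpleGraph V) (k : ℕ) : Prop :=
  ∃ c : Sym2 V → ℕ, (∀ e ∈ G.edgeSet, c e < k) ∧
    ∀ u v : V, ∃ p : G.Walk u v, p.IsPath ∧ p.length = G.dist u v ∧ (p.edges.map c).Nodup

/-- The rainbow connection number. -/
noncomputable def rc {V : Type*} (G : SimpleGraph V) : ℕ := sInf {k | RainbowConnected G k}

/-- The strong rainbow connection number. -/
noncomputable def src {V : Type*} (G : SimpleGraph V) : ℕ := sInf {k | StrongRainbowConnected G k}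
/-- The recursive circulant `G(N,d)`: the circulant graph on `ZMod N` with jumps
`±d^i` for `0 ≤ i ≤ ⌈log_d N⌉ - 1`. -/
def recCirc (N d : ℕ) : SimpleGraph (ZMod N) :=
  SimpleGraph.circulantGraph {x : ZMod N | ∃ i < Nat.clog d N, x = (d : ZMod N) ^ i}

/-- The value of a step: `(j, true)` is `+d^j` and `(j, false)` is `-d^j`. -/
def stepVal (N d : ℕ) (p : ℕ × Bool) : ZMod N :=
  if p.2 then (d : ZMod N) ^ p.1 else -((d : ZMod N) ^ p.1)

/-!
The distance from `u` to `v` in `G(2^m, 2)` is the least number of terms `±2^i` (`i < m`)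
summing to `v - u` modulo `2^m`. This weight obeys a halving recursion and is attained by the
non-adjacent form, whose exponents pairwise differ by at least `2`. Giving the jumps `±2^i` the
colour `⌊(m - 1 - i) / 2⌋` therefore makes every non-adjacent-form path a rainbow geodesic with
`⌈m/2⌉` colours. Conversely `∑_{j < m/2} 4^j` is at distance `⌊m/2⌋` from `0`, and a rainbow path
is at least as long as the distance between its ends.
-/

section Rainbow

variable {V : Type*} {G : SimpleGraph V} {k : ℕ}

theorem StrongRainbowConnected.rainbowConnected (h : StrongRainbowConnected G k) :
    RainbowConnected G k :=
  let ⟨c, hc, hpath⟩ := h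
  ⟨c, hc, fun u v ↦ let ⟨p, hp, _, hrainbow⟩ := hpath u v; ⟨p, hp, hrainbow⟩⟩

theorem RainbowConnected.dist_le (h : RainbowConnected G k) (u v : V) : G.dist u v ≤ k := by
  obtain ⟨c, hc, hpath⟩ := h
  obtain ⟨p, -, hrainbow⟩ := hpath u v
  calc G.dist u v ≤ p.length := SimpleGraph.dist_le p
    _ = (p.edges.map c).toFinset.card := by
      rw [List.toFinset_card_of_nodup hrainbow, List.length_map, Walk.length_edges]
    _ ≤ (range k).card := card_le_card fun i hi ↦ by
      obtain ⟨e, he, rfl⟩ := List.mem_map.1 (List.mem_toFinset.1 hi)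
      exact mem_range.2 (hc e (p.edges_subset_edgeSet he))
    _ = k := card_range k

theorem src_le (h : StrongRainbowConnected G k) : src G ≤ k := Nat.sInf_le h

theorem rc_le_src (h : StrongRainbowConnected G k) : rc G ≤ src G :=
  Nat.sInf_le (Nat.sInf_mem (⟨k, h⟩ : {k | StrongRainbowConnected G k}.Nonempty)).rainbowConnected

theorem dist_le_rc (h : RainbowConnected G k) (u v : V) : G.dist u v ≤ rc G :=
  (Nat.sInf_mem (⟨k, h⟩ : {k | RainbowConnected G k}.Nonempty)).dist_le u v

end Rainbow

/-- The least number of terms `±2 ^ i` with `i < m` summing to `x` modulo `2 ^ m`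
(see `dist_recCirc_two_pow`). -/
def nafWeight : ℕ → ℤ → ℕ
  | 0, _ => 0
  | m + 1, x =>
    if x % 2 = 0 then nafWeight m (x / 2)
    else min (nafWeight m ((x - 1) / 2)) (nafWeight m ((x + 1) / 2)) + 1

section NafWeight

variable {m : ℕ} {x : ℤ}

theorem nafWeight_succ_of_even (hx : x % 2 = 0) : nafWeight (m + 1) x = nafWeight m (x / 2) := by
  simp [nafWeight, hx]

theorem nafWeight_succ_of_odd (hx : x % 2 = 1) :
    nafWeight (m + 1) x = min (nafWeight m ((x - 1) / 2)) (nafWeight m ((x + 1) / 2)) + 1 := by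
  simp [nafWeight, hx]

theorem nafWeight_zero_right (m : ℕ) : nafWeight m 0 = 0 := by
  induction m with
  | zero => rfl
  | succ m ih => simpa [nafWeight_succ_of_even] using ih

theorem abs_nafWeight_add_one_sub_le (m : ℕ) (x : ℤ) :
    |(nafWeight m (x + 1) : ℤ) - nafWeight m x| ≤ 1 := by
  induction m generalizing x with
  | zero => simp [nafWeight]
  | succ m ih =>
    rw [abs_le]
    rcases Int.emod_two_eq_zero_or_one x with hx | hx
    · have := abs_le.1 (ih (x / 2))
      rw [nafWeight_succ_of_even hx, nafWeight_succ_of_odd (by omega),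
        show (x + 1 - 1) / 2 = x / 2 by omega, show (x + 1 + 1) / 2 = x / 2 + 1 by omega]
      omega
    · have := abs_le.1 (ih ((x - 1) / 2))
      rw [nafWeight_succ_of_odd hx, nafWeight_succ_of_even (by omega),
        show (x + 1) / 2 = (x - 1) / 2 + 1 by omega]
      omega

theorem nafWeight_neighbours_le_of_odd (hx : x % 2 = 1) :
    nafWeight m (x + 1) ≤ nafWeight m x ∧ nafWeight m (x - 1) ≤ nafWeight m x := by
  cases m with
  | zero => simp [nafWeight]
  | succ m =>
    have := abs_le.1 (abs_nafWeight_add_one_sub_le m ((x - 1) / 2))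
    rw [nafWeight_succ_of_odd hx, nafWeight_succ_of_even (by omega),
      nafWeight_succ_of_even (x := x - 1) (by omega), show (x + 1) / 2 = (x - 1) / 2 + 1 by omega]
    omega

theorem nafWeight_succ_of_emod_four_eq_one (hx : x % 4 = 1) :
    nafWeight (m + 1) x = nafWeight m ((x - 1) / 2) + 1 := by
  have := (nafWeight_neighbours_le_of_odd (m := m) (x := (x + 1) / 2) (by omega)).2
  rw [show (x + 1) / 2 - 1 = (x - 1) / 2 by omega] at this
  rw [nafWeight_succ_of_odd (by omega)]
  omega

theorem nafWeight_succ_of_emod_four_eq_three (hx : x % 4 = 3) :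
    nafWeight (m + 1) x = nafWeight m ((x + 1) / 2) + 1 := by
  have := (nafWeight_neighbours_le_of_odd (m := m) (x := (x - 1) / 2) (by omega)).1
  rw [show (x - 1) / 2 + 1 = (x + 1) / 2 by omega] at this
  rw [nafWeight_succ_of_odd (by omega)]
  omega

theorem nafWeight_add_two_pow_mul (m : ℕ) (x k : ℤ) :
    nafWeight m (x + 2 ^ m * k) = nafWeight m x := by
  induction m generalizing x with
  | zero => simp [nafWeight]
  | succ m ih =>
    rw [pow_succ, mul_comm _ (2 : ℤ), mul_assoc]
    rcases Int.emod_two_eq_zero_or_one x with hx | hx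
    · rw [nafWeight_succ_of_even hx, nafWeight_succ_of_even (by omega), ← ih (x / 2)]
      congr 1
      omega
    · rw [nafWeight_succ_of_odd hx, nafWeight_succ_of_odd (by omega), ← ih ((x - 1) / 2),
        ← ih ((x + 1) / 2)]
      congr 3 <;> omega

theorem nafWeight_eq_of_intCast_eq {y : ℤ} (h : (x : ZMod (2 ^ m)) = y) :
    nafWeight m x = nafWeight m y := by
  obtain ⟨k, hk⟩ := ((ZMod.intCast_eq_intCast_iff x y _).1 h).dvd
  rw [eq_add_of_sub_eq' hk, Nat.cast_pow, Nat.cast_ofNat, nafWeight_add_two_pow_mul]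

theorem nafWeight_sum_four_pow {n : ℕ} (hn : 2 * n ≤ m) :
    nafWeight m (∑ j ∈ range n, (4 : ℤ) ^ j) = n := by
  induction n generalizing m with
  | zero => simpa using nafWeight_zero_right m
  | succ n ih =>
    obtain ⟨m, rfl⟩ : ∃ m', m = m' + 2 := ⟨m - 2, by omega⟩
    have h : ∑ j ∈ range (n + 1), (4 : ℤ) ^ j = 4 * ∑ j ∈ range n, (4 : ℤ) ^ j + 1 := by
      rw [sum_range_succ', mul_sum]
      simp [pow_succ, mul_comm]
    rw [h, nafWeight_succ_of_emod_four_eq_one (by omega), nafWeight_succ_of_even (by omega),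
      show (4 * ∑ j ∈ range n, (4 : ℤ) ^ j + 1 - 1) / 2 / 2 = ∑ j ∈ range n, (4 : ℤ) ^ j by omega,
      ih (by omega)]

end NafWeight

def signedPow (p : ℕ × Bool) : ℤ := if p.2 then 2 ^ p.1 else -2 ^ p.1

theorem signedPow_map_succ (p : ℕ × Bool) : signedPow (p.map Nat.succ id) = 2 * signedPow p := by
  obtain ⟨i, _ | _⟩ := p <;> simp [signedPow, pow_succ, mul_comm]

theorem intCast_signedPow (N : ℕ) (p : ℕ × Bool) : (signedPow p : ZMod N) = stepVal N 2 p := by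
  obtain ⟨i, _ | _⟩ := p <;> simp [signedPow, stepVal]

theorem nafWeight_add_signedPow_le {m : ℕ} {p : ℕ × Bool} (hp : p.1 < m) (x : ℤ) :
    nafWeight m (x + signedPow p) ≤ nafWeight m x + 1 := by
  induction m generalizing p x with
  | zero => omega
  | succ m ih =>
    obtain ⟨_ | i, b⟩ := p
    · have h₁ := abs_le.1 (abs_nafWeight_add_one_sub_le (m + 1) x)
      have h₂ := abs_le.1 (abs_nafWeight_add_one_sub_le (m + 1) (x - 1))
      rw [sub_add_cancel] at h₂
      cases b <;> simp only [signedPow, pow_zero, Bool.false_eq_true, if_false, if_true,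
        ← sub_eq_add_neg] <;> omega
    · have hi : i < m := Nat.lt_of_succ_lt_succ hp
      have hs : signedPow (i + 1, b) = 2 * signedPow (i, b) := signedPow_map_succ (i, b)
      rw [hs]
      rcases Int.emod_two_eq_zero_or_one x with hx | hx
      · rw [nafWeight_succ_of_even hx, nafWeight_succ_of_even (by omega),
          show (x + 2 * signedPow (i, b)) / 2 = x / 2 + signedPow (i, b) by omega]
        exact ih (p := (i, b)) hi _
      · have h₁ := ih (p := (i, b)) hi ((x - 1) / 2)
        have h₂ := ih (p := (i, b)) hi ((x + 1) / 2)
        rw [nafWeight_succ_of_odd hx, nafWeight_succ_of_odd (by omega),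
          show (x + 2 * signedPow (i, b) - 1) / 2 = (x - 1) / 2 + signedPow (i, b) by omega,
          show (x + 2 * signedPow (i, b) + 1) / 2 = (x + 1) / 2 + signedPow (i, b) by omega]
        omega

/-- The non-adjacent form of `x` modulo `2 ^ m`, in the step encoding of `stepVal`. -/
def naf : ℕ → ℤ → List (ℕ × Bool)
  | 0, _ => []
  | m + 1, x =>
    if x % 2 = 0 then (naf m (x / 2)).map (Prod.map Nat.succ id)
    else if x % 4 = 1 then (0, true) :: (naf m ((x - 1) / 2)).map (Prod.map Nat.succ id)
    else (0, false) :: (naf m ((x + 1) / 2)).map (Prod.map Nat.succ id)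

theorem length_naf (m : ℕ) (x : ℤ) : (naf m x).length = nafWeight m x := by
  induction m generalizing x with
  | zero => rfl
  | succ m ih =>
    rw [naf]
    split_ifs with h₂ h₄
    · simp [ih, nafWeight_succ_of_even h₂]
    · simp [ih, nafWeight_succ_of_emod_four_eq_one h₄]
    · simp [ih, nafWeight_succ_of_emod_four_eq_three (by omega : x % 4 = 3)]

theorem fst_lt_of_mem_naf {m : ℕ} {x : ℤ} {p : ℕ × Bool} (hp : p ∈ naf m x) : p.1 < m := by
  induction m generalizing x p with
  | zero => simp [naf] at hp
  | succ m ih =>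
    rw [naf] at hp
    split_ifs at hp <;> simp only [List.mem_cons, List.mem_map] at hp <;> grind

theorem pairwise_naf (m : ℕ) (x : ℤ) : (naf m x).Pairwise (fun p q ↦ p.1 + 2 ≤ q.1) := by
  induction m generalizing x with
  | zero => simp [naf]
  | succ m ih =>
    have shifted : ∀ y, ((naf m y).map (Prod.map Nat.succ id)).Pairwise
        (fun p q ↦ p.1 + 2 ≤ q.1) :=
      fun y ↦ (ih y).map _ fun p q h ↦ by simp only [Prod.map_fst]; omega
    have shifted_even : ∀ y, y % 2 = 0 → ∀ q ∈ (naf m y).map (Prod.map Nat.succ id), 2 ≤ q.1 := by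
      intro y hy q hq
      cases m with
      | zero => simp [naf] at hq
      | succ m =>
        rw [naf, if_pos hy] at hq
        simp only [List.map_map, List.mem_map] at hq
        obtain ⟨r, -, rfl⟩ := hq
        simp
    rw [naf]
    split_ifs with h₂ h₄
    · exact shifted _
    · exact List.pairwise_cons.2 ⟨shifted_even ((x - 1) / 2) (by omega), shifted _⟩
    · exact List.pairwise_cons.2 ⟨shifted_even ((x + 1) / 2) (by omega), shifted _⟩

theorem sum_map_signedPow_naf_modEq (m : ℕ) (x : ℤ) :
    ((naf m x).map signedPow).sum ≡ x [ZMOD 2 ^ m] := by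
  induction m generalizing x with
  | zero => simp [Int.modEq_one]
  | succ m ih =>
    have shifted : ∀ y, (((naf m y).map (Prod.map Nat.succ id)).map signedPow).sum
        ≡ 2 * y [ZMOD 2 ^ (m + 1)] := by
      intro y
      rw [List.map_map, pow_succ, mul_comm _ 2]
      simp only [Function.comp_def, signedPow_map_succ, List.sum_map_mul_left]
      exact (ih y).mul_left'
    rw [naf]
    split_ifs with h₂ h₄
    · simpa [show 2 * (x / 2) = x by omega] using shifted (x / 2)
    · simpa [signedPow, show 1 + 2 * ((x - 1) / 2) = x by omega]
        using (shifted ((x - 1) / 2)).add_left 1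
    · simpa [signedPow, show -1 + 2 * ((x + 1) / 2) = x by omega]
        using (shifted ((x + 1) / 2)).add_left (-1)

section RecCirc

variable {m : ℕ}

theorem two_pow_ne_zero_of_lt {i : ℕ} (hi : i < m) : (2 : ZMod (2 ^ m)) ^ i ≠ 0 := by
  rw [show (2 : ZMod (2 ^ m)) ^ i = ((2 ^ i : ℕ) : ZMod (2 ^ m)) by push_cast; rfl, Ne,
    ZMod.natCast_eq_zero_iff, Nat.pow_dvd_pow_iff_le_right one_lt_two]
  omega

theorem stepVal_ne_zero {p : ℕ × Bool} (hp : p.1 < m) : stepVal (2 ^ m) 2 p ≠ 0 := by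
  unfold stepVal
  split_ifs <;> simpa using two_pow_ne_zero_of_lt hp

theorem addOrderOf_stepVal {p : ℕ × Bool} (hp : p.1 < m) :
    addOrderOf (stepVal (2 ^ m) 2 p) = 2 ^ (m - p.1) := by
  suffices addOrderOf ((2 : ZMod (2 ^ m)) ^ p.1) = 2 ^ (m - p.1) by
    unfold stepVal
    split_ifs <;> simpa [addOrderOf_neg]
  obtain ⟨n, hn⟩ : ∃ n, m - p.1 = n + 1 := ⟨m - p.1 - 1, by omega⟩
  rw [hn]
  apply addOrderOf_eq_prime_pow
  · rw [nsmul_eq_mul, Nat.cast_pow, Nat.cast_ofNat, ← pow_add]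
    exact two_pow_ne_zero_of_lt (by omega)
  · rw [nsmul_eq_mul, Nat.cast_pow, Nat.cast_ofNat, ← pow_add, show n + 1 + p.1 = m by omega]
    exact_mod_cast ZMod.natCast_self (2 ^ m)

theorem recCirc_two_pow_adj {u v : ZMod (2 ^ m)} :
    (recCirc (2 ^ m) 2).Adj u v ↔ ∃ p : ℕ × Bool, p.1 < m ∧ v = u + stepVal (2 ^ m) 2 p := by
  simp only [recCirc, circulantGraph_adj, Nat.clog_pow 2 m one_lt_two, Set.mem_ofPred_eq,
    Nat.cast_ofNat]
  constructor
  · rintro ⟨-, ⟨i, hi, h⟩ | ⟨i, hi, h⟩⟩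
    · exact ⟨(i, false), hi, by simp [stepVal, ← h]⟩
    · exact ⟨(i, true), hi, by simp [stepVal, ← h]⟩
  · rintro ⟨p, hp, rfl⟩
    refine ⟨by simpa [eq_comm] using stepVal_ne_zero hp, ?_⟩
    obtain ⟨i, _ | _⟩ := p
    · exact Or.inl ⟨i, hp, by simp [stepVal]⟩
    · exact Or.inr ⟨i, hp, by simp [stepVal]⟩

def walkOfSteps : (u : ZMod (2 ^ m)) → (L : List (ℕ × Bool)) → (∀ p ∈ L, p.1 < m) →
    (recCirc (2 ^ m) 2).Walk u (u + (L.map (stepVal (2 ^ m) 2)).sum)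
  | u, [], _ => Walk.nil.copy rfl (by simp)
  | u, p :: L, hL =>
    (Walk.cons (recCirc_two_pow_adj.2 ⟨p, hL p (by simp), rfl⟩)
      (walkOfSteps _ L fun q hq ↦ hL q (by simp [hq]))).copy rfl (by simp [add_assoc])

theorem length_walkOfSteps (u : ZMod (2 ^ m)) (L : List (ℕ × Bool)) (hL : ∀ p ∈ L, p.1 < m) :
    (walkOfSteps u L hL).length = L.length := by
  induction L generalizing u with
  | nil => simp [walkOfSteps]
  | cons p L ih => simp [walkOfSteps, ih]

theorem map_edges_walkOfSteps {α : Type*} (c : Sym2 (ZMod (2 ^ m)) → α) (f : ℕ × Bool → α)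
    (hc : ∀ a p, p.1 < m → c s(a, a + stepVal (2 ^ m) 2 p) = f p)
    (u : ZMod (2 ^ m)) (L : List (ℕ × Bool)) (hL : ∀ p ∈ L, p.1 < m) :
    (walkOfSteps u L hL).edges.map c = L.map f := by
  induction L generalizing u with
  | nil => simp [walkOfSteps]
  | cons p L ih => simp [walkOfSteps, ih, hc u p (hL p (by simp))]

theorem sum_map_stepVal_naf (x : ℤ) : ((naf m x).map (stepVal (2 ^ m) 2)).sum = x := by
  have h := (ZMod.intCast_eq_intCast_iff _ x (2 ^ m)).2
    (by exact_mod_cast sum_map_signedPow_naf_modEq m x)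
  simpa [Function.comp_def, intCast_signedPow] using h

def nafWalk (u v : ZMod (2 ^ m)) (x : ℤ) (hx : (x : ZMod (2 ^ m)) = v - u) :
    (recCirc (2 ^ m) 2).Walk u v :=
  (walkOfSteps u (naf m x) fun _ ↦ fst_lt_of_mem_naf).copy rfl
    (by rw [sum_map_stepVal_naf, hx, add_sub_cancel])

theorem length_nafWalk (u v : ZMod (2 ^ m)) (x : ℤ) (hx : (x : ZMod (2 ^ m)) = v - u) :
    (nafWalk u v x hx).length = nafWeight m x := by
  rw [nafWalk, Walk.length_copy, length_walkOfSteps, length_naf]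

theorem nafWeight_le_length {u v : ZMod (2 ^ m)} (w : (recCirc (2 ^ m) 2).Walk u v) (x : ℤ)
    (hx : (x : ZMod (2 ^ m)) = v - u) : nafWeight m x ≤ w.length := by
  induction w generalizing x with
  | nil =>
    rw [nafWeight_eq_of_intCast_eq (y := 0) (by simpa using hx), nafWeight_zero_right]
    exact le_rfl
  | @cons u w v huw w' ih =>
    obtain ⟨p, hp, rfl⟩ := recCirc_two_pow_adj.1 huw
    have h₁ := ih (x - signedPow p) (by push_cast; rw [hx, intCast_signedPow]; ring)
    have h₂ := nafWeight_add_signedPow_le hp (x - signedPow p)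
    rw [sub_add_cancel] at h₂
    rw [Walk.length_cons]
    omega

theorem dist_recCirc_two_pow (u v : ZMod (2 ^ m)) (x : ℤ) (hx : (x : ZMod (2 ^ m)) = v - u) :
    (recCirc (2 ^ m) 2).dist u v = nafWeight m x := by
  refine le_antisymm ?_ ?_
  · simpa [length_nafWalk] using dist_le (nafWalk u v x hx)
  · obtain ⟨w, hw⟩ := Reachable.exists_walk_length_eq_dist ⟨nafWalk u v x hx⟩
    exact hw ▸ nafWeight_le_length w x hx

/-- The jump `±2 ^ i` has additive order `2 ^ (m - i)`, so this colours it `(m - 1 - i) / 2`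
(`edgeColor_step`). -/
noncomputable def edgeColor (m : ℕ) : Sym2 (ZMod (2 ^ m)) → ℕ :=
  Sym2.lift ⟨fun a b ↦ (Nat.log 2 (addOrderOf (b - a)) - 1) / 2,
    fun a b ↦ by dsimp only; rw [← neg_sub, addOrderOf_neg]⟩

theorem edgeColor_step (a : ZMod (2 ^ m)) {p : ℕ × Bool} (hp : p.1 < m) :
    edgeColor m s(a, a + stepVal (2 ^ m) 2 p) = (m - 1 - p.1) / 2 := by
  simp only [edgeColor, Sym2.lift_mk, add_sub_cancel_left, addOrderOf_stepVal hp,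
    Nat.log_pow one_lt_two]
  omega

theorem strongRainbowConnected_recCirc_two_pow (m : ℕ) :
    StrongRainbowConnected (recCirc (2 ^ m) 2) ((m + 1) / 2) := by
  refine ⟨edgeColor m, fun e he ↦ ?_, fun u v ↦ ?_⟩
  · induction e using Sym2.ind with
    | h a b =>
      rw [mem_edgeSet] at he
      obtain ⟨p, hp, rfl⟩ := recCirc_two_pow_adj.1 he
      rw [edgeColor_step a hp]
      omega
  · have hx : (((v - u).val : ℤ) : ZMod (2 ^ m)) = v - u := by simp
    have hlen : (nafWalk u v _ hx).length = (recCirc (2 ^ m) 2).dist u v := by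
      rw [length_nafWalk, dist_recCirc_two_pow u v _ hx]
    refine ⟨nafWalk u v _ hx, Walk.isPath_of_length_eq_dist _ hlen, hlen, ?_⟩
    rw [nafWalk, Walk.edges_copy,
      map_edges_walkOfSteps _ (fun p ↦ (m - 1 - p.1) / 2) fun a _ hp ↦ edgeColor_step a hp]
    refine List.Pairwise.map (R := fun p q ↦ p.1 + 2 ≤ q.1 ∧ q.1 < m) _ (fun _ _ _ ↦ by omega) ?_
    exact (pairwise_naf m _).imp_of_mem fun _ hq hpq ↦ ⟨hpq, fst_lt_of_mem_naf hq⟩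

end RecCirc

theorem rc_src_recCirc_two_general (m : ℕ) :
    m / 2 ≤ rc (recCirc (2 ^ m) 2) ∧
    rc (recCirc (2 ^ m) 2) ≤ src (recCirc (2 ^ m) 2) ∧
    src (recCirc (2 ^ m) 2) ≤ (m + 1) / 2 ∧
    (Even m → rc (recCirc (2 ^ m) 2) = m / 2 ∧ src (recCirc (2 ^ m) 2) = m / 2) := by
  have hS := strongRainbowConnected_recCirc_two_pow m
  have hlower : m / 2 ≤ rc (recCirc (2 ^ m) 2) := by
    set x : ℤ := ∑ j ∈ range (m / 2), 4 ^ j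
    have hdist := dist_recCirc_two_pow 0 (x : ZMod (2 ^ m)) x (sub_zero _).symm
    rw [nafWeight_sum_four_pow (by omega)] at hdist
    exact hdist ▸ dist_le_rc hS.rainbowConnected _ _
  have hrc_src := rc_le_src hS
  have hsrc := src_le hS
  refine ⟨hlower, hrc_src, hsrc, fun ⟨t, ht⟩ ↦ ?_⟩
  omega

/-- ⌊m/2⌋ ≤ rc(G(2^m,2)) ≤ src(G(2^m,2)) ≤ ⌈m/2⌉, with equality m/2 when m is even. -/
theorem rc_src_recCirc_two (m : ℕ) (hm : 1 ≤ m) :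
    m / 2 ≤ rc (recCirc (2 ^ m) 2) ∧
    rc (recCirc (2 ^ m) 2) ≤ src (recCirc (2 ^ m) 2) ∧
    src (recCirc (2 ^ m) 2) ≤ (m + 1) / 2 ∧
    (Even m → rc (recCirc (2 ^ m) 2) = m / 2 ∧ src (recCirc (2 ^ m) 2) = m / 2) :=
  rc_src_recCirc_two_general m
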